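/- Let k ≥ 2 and let a₁,…,a_k be positive integers with gcd(a₁,…,a_k) = 1 and a = min(a₁,…,a_k), let p be a nonnegative integer, and let x be a real number with |x| < 1. Then (1 − x^a) · Σ_{s ∈ S_p(a₁,…,a_k)} x^s = Σ_{j=0}^{a−1} x^{m_j^{(p)}}, where the sum on the left is the (convergent) series over all elements of S_p and m_j^{(p)} is the least element of S_p congruent to j modulo a (with m_0^{(0)} = 0). -/

import Mathlib

/-- The denumerant `d(n; a 0, …, a (k-1))`: the number of tuples `x` of nonnegative
integers with `x 0 * a 0 + ⋯ + x (k-1) * a (k-1) = n`. -/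
noncomputable def denum (k : ℕ) (a : ℕ → ℕ) (n : ℕ) : ℕ :=
  Nat.card {x : Fin k → ℕ // ∑ i : Fin k, x i * a i.1 = n}

/-! Adding `1` to the first coordinate injects the representations of `n` into those of
`n + a 0`, so `S_p` is closed under `n ↦ n + a 0`. Hence `S_p` is the disjoint union of the
progressions `m_j + (a 0) ℕ` for `j < a 0`, and each of them contributes the geometric series
`x ^ m_j / (1 - x ^ a 0)`. -/

lemma finite_denum_fiber (k : ℕ) (a : ℕ → ℕ) (hapos : ∀ i < k, 0 < a i) (n : ℕ) :
    Finite {x : Fin k → ℕ // ∑ i : Fin k, x i * a i.1 = n} := by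
  have hle (x : {x : Fin k → ℕ // ∑ i : Fin k, x i * a i.1 = n}) (i : Fin k) : x.1 i ≤ n :=
    calc x.1 i ≤ x.1 i * a i.1 := Nat.le_mul_of_pos_right _ (hapos i.1 i.2)
      _ ≤ ∑ j : Fin k, x.1 j * a j.1 :=
        Finset.single_le_sum (f := fun j : Fin k => x.1 j * a j.1) (by simp) (Finset.mem_univ i)
      _ = n := x.2
  exact Finite.of_injective (fun x i => (⟨x.1 i, Nat.lt_succ_of_le (hle x i)⟩ : Fin (n + 1)))
    fun x y h => Subtype.ext <| funext fun i => congrArg Fin.val (congrFun h i)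

lemma denum_le_denum_add (k : ℕ) (a : ℕ → ℕ) (hapos : ∀ i < k, 0 < a i) (i : Fin k) (n : ℕ) :
    denum k a n ≤ denum k a (n + a i) := by
  have := finite_denum_fiber k a hapos (n + a i)
  refine Nat.card_le_card_of_injective (fun x => ⟨x.1 + Pi.single i 1, ?_⟩) ?_
  · simp [add_mul, Finset.sum_add_distrib, x.2, Pi.single_apply]
  · intro x y h
    exact Subtype.ext (add_right_cancel (congrArg Subtype.val h))

section Apery

variable {S : Set ℕ} {d : ℕ} {m : ℕ → ℕ}

lemma add_mul_mem_of_add_mem (hS : ∀ n ∈ S, n + d ∈ S) {n : ℕ} (hn : n ∈ S) (t : ℕ) :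
    n + t * d ∈ S := by
  induction t with
  | zero => simpa using hn
  | succ t ih => simpa [add_mul, ← add_assoc] using hS _ ih

lemma apery_add_mul_bijective (hd : 0 < d) (hS : ∀ n ∈ S, n + d ∈ S)
    (hm : ∀ j < d, IsLeast {n | n ∈ S ∧ n % d = j} (m j)) :
    Function.Bijective fun jt : Fin d × ℕ =>
      (⟨m jt.1 + jt.2 * d, add_mul_mem_of_add_mem hS (hm jt.1 jt.1.2).1.1 jt.2⟩ : S) := by
  have hmod (j : Fin d) (t : ℕ) : (m j + t * d) % d = j := by
    rw [Nat.add_mul_mod_self_right, (hm j j.2).1.2]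
  refine ⟨fun ⟨j, t⟩ ⟨j', t'⟩ h => ?_, fun ⟨s, hs⟩ => ?_⟩
  · have h : m j + t * d = m j' + t' * d := congrArg Subtype.val h
    obtain rfl : j = j' := Fin.ext (by rw [← hmod j t, ← hmod j' t', h])
    obtain rfl : t = t' := Nat.eq_of_mul_eq_mul_right hd (by omega)
    rfl
  · have hsd : s % d < d := Nat.mod_lt s hd
    have hle : m (s % d) ≤ s := (hm _ hsd).2 ⟨hs, rfl⟩
    have hdvd : d ∣ s - m (s % d) := (Nat.modEq_iff_dvd' hle).mp (hm _ hsd).1.2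
    refine ⟨(⟨s % d, hsd⟩, (s - m (s % d)) / d), Subtype.ext ?_⟩
    change m (s % d) + (s - m (s % d)) / d * d = s
    rw [Nat.div_mul_cancel hdvd]
    omega

noncomputable def aperyEquiv (hd : 0 < d) (hS : ∀ n ∈ S, n + d ∈ S)
    (hm : ∀ j < d, IsLeast {n | n ∈ S ∧ n % d = j} (m j)) : Fin d × ℕ ≃ S :=
  Equiv.ofBijective _ (apery_add_mul_bijective hd hS hm)

theorem one_sub_pow_mul_tsum_eq_sum_apery {K : Type*} [NormedField K] [CompleteSpace K]
    {x : K} (hx : ‖x‖ < 1) (hd : 0 < d) (hS : ∀ n ∈ S, n + d ∈ S)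
    (hm : ∀ j < d, IsLeast {n | n ∈ S ∧ n % d = j} (m j)) :
    (1 - x ^ d) * ∑' s : S, x ^ (s : ℕ) = ∑ j ∈ Finset.range d, x ^ m j := by
  have hxd : ‖x ^ d‖ < 1 := by
    rw [norm_pow]
    exact pow_lt_one₀ (norm_nonneg x) hx hd.ne'
  have hsum : Summable fun jt : Fin d × ℕ => x ^ (m jt.1 + jt.2 * d) :=
    (aperyEquiv hd hS hm).summable_iff.mpr ((summable_geometric_of_norm_lt_one hx).subtype S)
  have hgeom (j : Fin d) : ∑' t : ℕ, x ^ (m j + t * d) = x ^ m j * (1 - x ^ d)⁻¹ := by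
    simp_rw [pow_add, mul_comm _ d, pow_mul]
    rw [tsum_mul_left, tsum_geometric_of_norm_lt_one hxd]
  have hne : 1 - x ^ d ≠ 0 := sub_ne_zero.mpr fun h => by simp [← h] at hxd
  calc (1 - x ^ d) * ∑' s : S, x ^ (s : ℕ)
      = (1 - x ^ d) * ∑' jt : Fin d × ℕ, x ^ (m jt.1 + jt.2 * d) := by
        rw [← (aperyEquiv hd hS hm).tsum_eq]
        rfl
    _ = (1 - x ^ d) * ∑ j : Fin d, x ^ m j * (1 - x ^ d)⁻¹ := by
        rw [hsum.tsum_prod, tsum_fintype]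
        simp_rw [hgeom]
    _ = ∑ j ∈ Finset.range d, x ^ m j := by
        rw [← Finset.sum_mul, Fin.sum_univ_eq_sum_range (fun j => x ^ m j), mul_comm,
          inv_mul_cancel_right₀ hne]

end Apery

theorem pHilbert_series_eq_general (k : ℕ) (hk : 2 ≤ k) (a : ℕ → ℕ)
    (hapos : ∀ i < k, 0 < a i)
    (p : ℕ) (m : ℕ → ℕ)
    (hm : ∀ j < a 0, IsLeast {n : ℕ | p < denum k a n ∧ n % a 0 = j} (m j))
    (x : ℝ) (hx : |x| < 1) :
    (1 - x ^ (a 0)) * (∑' s : {n : ℕ | p < denum k a n}, x ^ (s : ℕ))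
      = ∑ j ∈ Finset.range (a 0), x ^ (m j) := by
  have hk0 : 0 < k := by omega
  have hclosed (n : ℕ) (hn : p < denum k a n) : p < denum k a (n + a 0) :=
    hn.trans_le (denum_le_denum_add k a hapos ⟨0, hk0⟩ n)
  exact one_sub_pow_mul_tsum_eq_sum_apery (by rwa [Real.norm_eq_abs]) (hapos 0 hk0) hclosed hm

/-- The `p`-Hilbert series identity:
`(1 - x^{a₁}) · Σ_{s ∈ S_p} x^s = Σ_{j<a₁} x^{m_j^{(p)}}` for real `|x| < 1`. -/
theorem pHilbert_series_eq (k : ℕ) (hk : 2 ≤ k) (a : ℕ → ℕ)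
    (hapos : ∀ i < k, 0 < a i)
    (hgcd : (Finset.range k).gcd a = 1)
    (hmin : ∀ i < k, a 0 ≤ a i)
    (p : ℕ) (m : ℕ → ℕ)
    (hm : ∀ j < a 0, IsLeast {n : ℕ | p < denum k a n ∧ n % a 0 = j} (m j))
    (x : ℝ) (hx : |x| < 1) :
    (1 - x ^ (a 0)) * (∑' s : {n : ℕ | p < denum k a n}, x ^ (s : ℕ))
      = ∑ j ∈ Finset.range (a 0), x ^ (m j) :=
  pHilbert_series_eq_general k hk a hapos p m hm x hx
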